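/- arXiv:2004.05298 — 2 statements merged into one kernel-verified Lean document; each statement's English description precedes it below -/
import Mathlib

section
/- (Convergence of RSGD-scale) Let R_S : ℝ^d → ℝ be differentiable with β-Lipschitz gradient and bounded below by R_S(x_*). On a probability space with filtration (𝔉_t), let (x_t), (r_t) be adapted sequences of random vectors in ℝ^d with x_0 deterministic, r_0 = 0, and (g_t) random vectors with g_t measurable with respect to 𝔉_{t+1}, E[g_t | 𝔉_t] = ∇R_S(x_t − r_t), and E‖g_t‖² ≤ σ². Suppose the RSGD-scale recursions hold with scaling factor α ∈ (0,1) and fixed learning rate γ > 0 with γ ≤ 1/β: x_{t+1} = x_t − α·(r_t + γ·g_t) and r_{t+1} = (1−α)·(r_t + γ·g_t). Then for all c₁, c₂ > 0 with (1−α)²·(1+c₂) < 1 and all T ≥ 1, min_{0 ≤ t ≤ T−1} E‖∇R_S(x_t)‖² ≤ (1+c₁)·(R_S(x_0) − R_S(x_*))/(γT) + (1+c₁)·β·γ·σ²/2 + ((1−α)²·(1+1/c₂)·(1+1/c₁) / (1 − (1−α)²·(1+c₂)))·β²·γ²·σ². -/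
/-!
The reference points `y t = x t - r t` follow plain SGD, `y (t+1) = y t - γ • g t`, with unbiased
gradients `∇R_S (y t)`. The descent lemma and unbiasedness give
`E R_S(y (t+1)) ≤ E R_S(y t) - γ E‖∇R_S(y t)‖² + βγ²σ²/2`, which telescopes.
By Young's inequality `E‖r (t+1)‖² ≤ (1-α)²(1+c₂) E‖r t‖² + (1-α)²(1+1/c₂)γ²σ²`, so the residual
stays below the fixed point of this contraction. A second Young inequality and the Lipschitz
gradient transfer the bound from `y t` to `x t = y t + r t`, and the minimum over `t < T` is at
most the average.
-/

open MeasureTheory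
open scoped InnerProductSpace

section Smooth

variable {E : Type*} [NormedAddCommGroup E] [InnerProductSpace ℝ E] [CompleteSpace E]
  {f : E → ℝ} {β : ℝ}

theorem le_add_inner_gradient_add_of_gradient_lipschitz (hf : Differentiable ℝ f)
    (hsmooth : ∀ x y, ‖gradient f x - gradient f y‖ ≤ β * ‖x - y‖) (a b : E) :
    f b ≤ f a + ⟪gradient f a, b - a⟫_ℝ + β / 2 * ‖b - a‖ ^ 2 := by
  set v := b - a
  let ψ : ℝ → ℝ := fun t => f (a + t • v) - t * ⟪gradient f a, v⟫_ℝ - β / 2 * ‖v‖ ^ 2 * t ^ 2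
  let ψ' : ℝ → ℝ := fun t =>
    ⟪gradient f (a + t • v), v⟫_ℝ - ⟪gradient f a, v⟫_ℝ - β * ‖v‖ ^ 2 * t
  have hderiv : ∀ t, HasDerivAt ψ (ψ' t) t := by
    intro t
    have hline : HasDerivAt (fun s : ℝ => a + s • v) v t := by
      simpa using ((hasDerivAt_id t).smul_const v).const_add a
    have hfline := (hf (a + t • v)).hasGradientAt.hasFDerivAt.comp_hasDerivAt t hline
    simp only [InnerProductSpace.toDual_apply_apply] at hfline
    refine ((hfline.sub ((hasDerivAt_id t).mul_const _)).sub
      (((hasDerivAt_id t).pow 2).const_mul (β / 2 * ‖v‖ ^ 2))).congr_deriv ?_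
    simp only [ψ', id, Nat.cast_ofNat]
    ring
  have hψ'_nonpos : ∀ t ∈ interior (Set.Ici (0 : ℝ)), ψ' t ≤ 0 := by
    intro t ht
    rw [interior_Ici] at ht
    have hlip := hsmooth (a + t • v) a
    rw [add_sub_cancel_left, norm_smul, Real.norm_of_nonneg ht.out.le, ← mul_assoc] at hlip
    calc ψ' t = ⟪gradient f (a + t • v) - gradient f a, v⟫_ℝ - β * t * ‖v‖ ^ 2 := by
          simp only [ψ', inner_sub_left]
          ring
      _ ≤ β * t * ‖v‖ * ‖v‖ - β * t * ‖v‖ ^ 2 := by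
          gcongr
          exact (real_inner_le_norm _ _).trans (mul_le_mul_of_nonneg_right hlip (norm_nonneg v))
      _ = 0 := by ring
  have hanti := antitoneOn_of_hasDerivWithinAt_nonpos (convex_Ici 0)
    (fun t _ => (hderiv t).continuousAt.continuousWithinAt)
    (fun t _ => (hderiv t).hasDerivWithinAt) hψ'_nonpos
  have hψ01 : ψ 1 ≤ ψ 0 := hanti Set.self_mem_Ici (Set.mem_Ici.mpr zero_le_one) zero_le_one
  have hψ0 : ψ 0 = f a := by simp [ψ]
  have hψ1 : ψ 1 = f b - ⟪gradient f a, b - a⟫_ℝ - β / 2 * ‖b - a‖ ^ 2 := by simp [ψ, v]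
  linarith

theorem lipschitzWith_gradient (hsmooth : ∀ x y, ‖gradient f x - gradient f y‖ ≤ β * ‖x - y‖) :
    LipschitzWith β.toNNReal (gradient f) :=
  LipschitzWith.of_dist_le_mul fun x y => by
    rw [dist_eq_norm, dist_eq_norm, Real.coe_toNNReal']
    exact (hsmooth x y).trans (mul_le_mul_of_nonneg_right (le_max_left _ _) (norm_nonneg _))

end Smooth

theorem norm_add_sq_le_one_add_mul {F : Type*} [SeminormedAddCommGroup F] {c : ℝ} (hc : 0 < c)
    (u v : F) : ‖u + v‖ ^ 2 ≤ (1 + c) * ‖u‖ ^ 2 + (1 + 1 / c) * ‖v‖ ^ 2 :=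
  calc ‖u + v‖ ^ 2
    _ ≤ (‖u‖ + ‖v‖) ^ 2 := by grw [norm_add_le u v]
    _ = ‖u‖ ^ 2 + ‖v‖ ^ 2 + 2 * ‖u‖ * ‖v‖ := by ring
    _ ≤ ‖u‖ ^ 2 + ‖v‖ ^ 2 + (c * ‖u‖ ^ 2 + c⁻¹ * ‖v‖ ^ 2) := by
      grw [two_mul_le_add_mul_sq hc]
    _ = (1 + c) * ‖u‖ ^ 2 + (1 + 1 / c) * ‖v‖ ^ 2 := by ring

theorem sq_norm_le_of_lipschitz {E F : Type*} [SeminormedAddCommGroup E] [SeminormedAddCommGroup F]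
    {G : E → F} {β c : ℝ} (hG : ∀ x y, ‖G x - G y‖ ≤ β * ‖x - y‖) (hc : 0 < c) (x y : E) :
    ‖G x‖ ^ 2 ≤ (1 + c) * ‖G y‖ ^ 2 + (1 + 1 / c) * β ^ 2 * ‖x - y‖ ^ 2 := by
  have hsq : ‖G x - G y‖ ^ 2 ≤ (β * ‖x - y‖) ^ 2 := pow_le_pow_left₀ (norm_nonneg _) (hG x y) 2
  calc ‖G x‖ ^ 2
    _ = ‖G y + (G x - G y)‖ ^ 2 := by rw [add_sub_cancel]
    _ ≤ (1 + c) * ‖G y‖ ^ 2 + (1 + 1 / c) * ‖G x - G y‖ ^ 2 := norm_add_sq_le_one_add_mul hc _ _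
    _ ≤ (1 + c) * ‖G y‖ ^ 2 + (1 + 1 / c) * (β * ‖x - y‖) ^ 2 := by gcongr
    _ = (1 + c) * ‖G y‖ ^ 2 + (1 + 1 / c) * β ^ 2 * ‖x - y‖ ^ 2 := by ring

theorem le_div_one_sub_of_le_mul_add {u : ℕ → ℝ} {q b : ℝ} (hq0 : 0 ≤ q) (hq1 : q < 1)
    (h0 : u 0 ≤ b / (1 - q)) (hstep : ∀ t, u (t + 1) ≤ q * u t + b) (t : ℕ) :
    u t ≤ b / (1 - q) := by
  induction t with
  | zero => exact h0
  | succ t ih =>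
    have hfix : q * (b / (1 - q)) + b = b / (1 - q) := by
      field_simp [(sub_pos.mpr hq1).ne']
      ring
    calc u (t + 1) ≤ q * u t + b := hstep t
      _ ≤ q * (b / (1 - q)) + b := by gcongr
      _ = b / (1 - q) := hfix

theorem Finset.inf'_range_le_of_le_mul_add {T : ℕ} (hT : (Finset.range T).Nonempty)
    {a b : ℕ → ℝ} {c K M : ℝ} (hc : 0 ≤ c) (hab : ∀ t, a t ≤ c * b t + K)
    (hb : ∑ t ∈ Finset.range T, b t ≤ M) : (Finset.range T).inf' hT a ≤ c * M / T + K := by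
  have hT0 : (T : ℝ) ≠ 0 := by simpa using hT.ne_empty
  have hsum : ∑ t ∈ Finset.range T, a t ≤ ∑ _t ∈ Finset.range T, (c * M / T + K) :=
    calc ∑ t ∈ Finset.range T, a t
      _ ≤ ∑ t ∈ Finset.range T, (c * b t + K) := Finset.sum_le_sum fun t _ => hab t
      _ = c * ∑ t ∈ Finset.range T, b t + T * K := by
        rw [Finset.sum_add_distrib, ← Finset.mul_sum, Finset.sum_const, Finset.card_range,
          nsmul_eq_mul]
      _ ≤ c * M + T * K := by gcongr
      _ = ∑ _t ∈ Finset.range T, (c * M / T + K) := by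
        rw [Finset.sum_const, Finset.card_range, nsmul_eq_mul]
        field_simp
  obtain ⟨t, ht, hle⟩ := Finset.exists_le_of_sum_le hT hsum
  exact (Finset.inf'_le a ht).trans hle

section Stochastic

variable {Ω E : Type*} {m0 : MeasurableSpace Ω} {μ : Measure Ω}
  [NormedAddCommGroup E] [InnerProductSpace ℝ E]

theorem integral_le_mul_add_mul {F G H : Ω → ℝ} (hF : Integrable F μ) (hG : Integrable G μ)
    (hH : Integrable H μ) {a b : ℝ} (h : ∀ ω, F ω ≤ a * G ω + b * H ω) :
    ∫ ω, F ω ∂μ ≤ a * ∫ ω, G ω ∂μ + b * ∫ ω, H ω ∂μ := by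
  rw [← integral_const_mul, ← integral_const_mul, ← integral_add (hG.const_mul a) (hH.const_mul b)]
  exact integral_mono hF ((hG.const_mul a).add (hH.const_mul b)) h

theorem MeasureTheory.MemLp.integrable_inner {X Y : Ω → E} (hX : MemLp X 2 μ) (hY : MemLp Y 2 μ) :
    Integrable (fun ω => ⟪X ω, Y ω⟫_ℝ) μ :=
  memLp_one_iff_integrable.mp <| hX.of_bilin (fun u v => ⟪u, v⟫_ℝ) 1 hY
    (hX.1.inner hY.1) (ae_of_all _ fun ω => by simpa using nnnorm_inner_le_nnnorm (X ω) (Y ω))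

theorem integral_inner_eq_integral_sq_norm_of_condExp_eq [CompleteSpace E]
    {m : MeasurableSpace Ω} (hm : m ≤ m0) [SigmaFinite (μ.trim hm)] {X Y : Ω → E}
    (hX : StronglyMeasurable[m] X) (hXY : Integrable (fun ω => ⟪X ω, Y ω⟫_ℝ) μ)
    (hY : Integrable Y μ) (hcond : μ[Y|m] =ᵐ[μ] X) :
    ∫ ω, ⟪X ω, Y ω⟫_ℝ ∂μ = ∫ ω, ‖X ω‖ ^ 2 ∂μ := by
  calc ∫ ω, ⟪X ω, Y ω⟫_ℝ ∂μ
    _ = ∫ ω, (μ[fun ω => ⟪X ω, Y ω⟫_ℝ|m]) ω ∂μ := (integral_condExp hm).symm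
    _ = ∫ ω, ⟪X ω, X ω⟫_ℝ ∂μ := integral_congr_ae <| by
        filter_upwards [condExp_bilin_of_stronglyMeasurable_left (innerSL ℝ) hX hXY hY, hcond]
          with ω hpull hω
        rwa [hω, innerSL_apply_apply] at hpull
    _ = ∫ ω, ‖X ω‖ ^ 2 ∂μ := by simp_rw [real_inner_self_eq_norm_sq]

theorem memLp_of_sgd [IsFiniteMeasure μ] {p : ENNReal} {γ : ℝ} {x₀ : E} {y g : ℕ → Ω → E}
    (hy0 : ∀ ω, y 0 ω = x₀) (hy : ∀ t ω, y (t + 1) ω = y t ω - γ • g t ω)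
    (hg : ∀ t, MemLp (g t) p μ) (t : ℕ) : MemLp (y t) p μ := by
  induction t with
  | zero => rw [funext hy0]; exact memLp_const x₀
  | succ t ih => rw [funext (hy t)]; exact ih.sub ((hg t).const_smul γ)

theorem memLp_of_scaled_residual {p : ENNReal} {a γ : ℝ} {r g : ℕ → Ω → E}
    (hr0 : ∀ ω, r 0 ω = 0) (hr : ∀ t ω, r (t + 1) ω = a • (r t ω + γ • g t ω))
    (hg : ∀ t, MemLp (g t) p μ) (t : ℕ) : MemLp (r t) p μ := by
  induction t with
  | zero => rw [funext hr0]; exact MemLp.zero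
  | succ t ih => rw [funext (hr t)]; exact (ih.add ((hg t).const_smul γ)).const_smul a

theorem integral_sq_norm_scaled_residual_le {a c γ σ : ℝ} (hc : 0 < c)
    (hq : a ^ 2 * (1 + c) < 1) {r g : ℕ → Ω → E} (hr0 : ∀ ω, r 0 ω = 0)
    (hr : ∀ t ω, r (t + 1) ω = a • (r t ω + γ • g t ω)) (hg : ∀ t, MemLp (g t) 2 μ)
    (hσ : ∀ t, ∫ ω, ‖g t ω‖ ^ 2 ∂μ ≤ σ ^ 2) (t : ℕ) :
    ∫ ω, ‖r t ω‖ ^ 2 ∂μ ≤ a ^ 2 * (1 + 1 / c) * γ ^ 2 * σ ^ 2 / (1 - a ^ 2 * (1 + c)) := by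
  refine le_div_one_sub_of_le_mul_add (u := fun t => ∫ ω, ‖r t ω‖ ^ 2 ∂μ) (by positivity) hq
    ?_ (fun t => ?_) t
  · simpa [hr0] using div_nonneg (by positivity) (sub_pos.2 hq).le
  have hpointwise : ∀ ω, ‖r (t + 1) ω‖ ^ 2
      ≤ a ^ 2 * (1 + c) * ‖r t ω‖ ^ 2 + a ^ 2 * (1 + 1 / c) * γ ^ 2 * ‖g t ω‖ ^ 2 := fun ω =>
    calc ‖r (t + 1) ω‖ ^ 2
      _ = a ^ 2 * ‖r t ω + γ • g t ω‖ ^ 2 := by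
        rw [hr, norm_smul, mul_pow, Real.norm_eq_abs, sq_abs]
      _ ≤ a ^ 2 * ((1 + c) * ‖r t ω‖ ^ 2 + (1 + 1 / c) * ‖γ • g t ω‖ ^ 2) := by
        gcongr
        exact norm_add_sq_le_one_add_mul hc _ _
      _ = a ^ 2 * (1 + c) * ‖r t ω‖ ^ 2 + a ^ 2 * (1 + 1 / c) * γ ^ 2 * ‖g t ω‖ ^ 2 := by
        rw [norm_smul, mul_pow, Real.norm_eq_abs, sq_abs]
        ring
  have hstep := integral_le_mul_add_mul
    ((memLp_of_scaled_residual hr0 hr hg (t + 1)).integrable_norm_pow two_ne_zero)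
    ((memLp_of_scaled_residual hr0 hr hg t).integrable_norm_pow two_ne_zero)
    ((hg t).integrable_norm_pow two_ne_zero) hpointwise
  have hnoise : a ^ 2 * (1 + 1 / c) * γ ^ 2 * ∫ ω, ‖g t ω‖ ^ 2 ∂μ
      ≤ a ^ 2 * (1 + 1 / c) * γ ^ 2 * σ ^ 2 := by
    gcongr
    exact hσ t
  linarith

end Stochastic

section SGD

variable {Ω E : Type*} {m0 : MeasurableSpace Ω} {μ : Measure Ω}
  [NormedAddCommGroup E] [InnerProductSpace ℝ E] [CompleteSpace E] {f : E → ℝ} {β f₀ : ℝ}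

theorem MeasureTheory.MemLp.gradient_comp [IsFiniteMeasure μ]
    (hsmooth : ∀ x y, ‖gradient f x - gradient f y‖ ≤ β * ‖x - y‖)
    {X : Ω → E} (hX : MemLp X 2 μ) : MemLp (fun ω => gradient f (X ω)) 2 μ := by
  refine ((memLp_const ‖gradient f 0‖).add (hX.norm.const_mul β)).of_le
    ((lipschitzWith_gradient hsmooth).continuous.comp_aestronglyMeasurable hX.1)
    (ae_of_all _ fun ω => ?_)
  have hgrowth := (norm_sub_norm_le _ _).trans (hsmooth (X ω) 0)
  rw [sub_zero, sub_le_iff_le_add'] at hgrowth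
  exact hgrowth.trans (le_abs_self _)

theorem integral_sq_norm_gradient_comp_le [IsFiniteMeasure μ]
    (hsmooth : ∀ x y, ‖gradient f x - gradient f y‖ ≤ β * ‖x - y‖) {c : ℝ} (hc : 0 < c)
    {X Y : Ω → E} (hX : MemLp X 2 μ) (hY : MemLp Y 2 μ) :
    ∫ ω, ‖gradient f (X ω)‖ ^ 2 ∂μ ≤ (1 + c) * ∫ ω, ‖gradient f (Y ω)‖ ^ 2 ∂μ
      + (1 + 1 / c) * β ^ 2 * ∫ ω, ‖X ω - Y ω‖ ^ 2 ∂μ :=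
  integral_le_mul_add_mul (hX.gradient_comp hsmooth).integrable_norm_pow'
    (hY.gradient_comp hsmooth).integrable_norm_pow' (hX.sub hY).integrable_norm_pow'
    fun ω => sq_norm_le_of_lipschitz hsmooth hc (X ω) (Y ω)

theorem MeasureTheory.MemLp.integrable_comp_of_gradient_lipschitz [IsFiniteMeasure μ]
    (hf : Differentiable ℝ f) (hsmooth : ∀ x y, ‖gradient f x - gradient f y‖ ≤ β * ‖x - y‖)
    (hlb : ∀ x, f₀ ≤ f x)
    {X : Ω → E} (hX : MemLp X 2 μ) : Integrable (fun ω => f (X ω)) μ :=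
  integrable_of_le_of_le (g₁ := fun _ => f₀)
    (g₂ := fun ω => f 0 + ⟪gradient f 0, X ω⟫_ℝ + β / 2 * ‖X ω‖ ^ 2)
    (hf.continuous.comp_aestronglyMeasurable hX.1) (ae_of_all _ fun ω => hlb _)
    (ae_of_all _ fun ω => by
      simpa using le_add_inner_gradient_add_of_gradient_lipschitz hf hsmooth 0 (X ω))
    (integrable_const _)
    (((integrable_const _).add ((hX.integrable one_le_two).const_inner _)).add
      (hX.integrable_norm_pow'.const_mul _))

theorem integral_comp_sub_smul_le [IsFiniteMeasure μ] (hf : Differentiable ℝ f)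
    (hsmooth : ∀ x y, ‖gradient f x - gradient f y‖ ≤ β * ‖x - y‖) (hlb : ∀ x, f₀ ≤ f x)
    {m : MeasurableSpace Ω} (hm : m ≤ m0) {X G : Ω → E} (hX : StronglyMeasurable[m] X)
    (hX2 : MemLp X 2 μ) (hG : MemLp G 2 μ) (hunb : μ[G|m] =ᵐ[μ] fun ω => gradient f (X ω))
    (γ : ℝ) :
    ∫ ω, f (X ω - γ • G ω) ∂μ ≤ ∫ ω, f (X ω) ∂μ - γ * ∫ ω, ‖gradient f (X ω)‖ ^ 2 ∂μ
      + β / 2 * γ ^ 2 * ∫ ω, ‖G ω‖ ^ 2 ∂μ := by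
  have hpointwise : ∀ ω, f (X ω - γ • G ω) ≤ f (X ω) - γ * ⟪gradient f (X ω), G ω⟫_ℝ
      + β / 2 * γ ^ 2 * ‖G ω‖ ^ 2 := fun ω => by
    have := le_add_inner_gradient_add_of_gradient_lipschitz hf hsmooth (X ω) (X ω - γ • G ω)
    rwa [sub_sub_cancel_left, inner_neg_right, real_inner_smul_right, norm_neg, norm_smul,
      Real.norm_eq_abs, mul_pow, sq_abs, ← sub_eq_add_neg, ← mul_assoc] at this
  have hgradX := hX2.gradient_comp hsmooth
  have hinner : ∫ ω, ⟪gradient f (X ω), G ω⟫_ℝ ∂μ = ∫ ω, ‖gradient f (X ω)‖ ^ 2 ∂μ :=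
    integral_inner_eq_integral_sq_norm_of_condExp_eq hm
      ((lipschitzWith_gradient hsmooth).continuous.comp_stronglyMeasurable hX)
      (hgradX.integrable_inner hG) (hG.integrable one_le_two) hunb
  have hfX := hX2.integrable_comp_of_gradient_lipschitz hf hsmooth hlb
  have hinnerγ := (hgradX.integrable_inner hG).const_mul γ
  have hGsq := hG.integrable_norm_pow'.const_mul (β / 2 * γ ^ 2)
  have hfXinner : Integrable (fun ω => f (X ω) - γ * ⟪gradient f (X ω), G ω⟫_ℝ) μ :=
    hfX.sub hinnerγ
  calc ∫ ω, f (X ω - γ • G ω) ∂μ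
    _ ≤ ∫ ω, (f (X ω) - γ * ⟪gradient f (X ω), G ω⟫_ℝ + β / 2 * γ ^ 2 * ‖G ω‖ ^ 2) ∂μ :=
      integral_mono ((hX2.sub (hG.const_smul γ)).integrable_comp_of_gradient_lipschitz hf hsmooth
        hlb) (hfXinner.add hGsq) hpointwise
    _ = _ := by
      rw [integral_add hfXinner hGsq, integral_sub hfX hinnerγ, integral_const_mul,
        integral_const_mul, hinner]

theorem sum_integral_sq_norm_gradient_sgd_le [IsProbabilityMeasure μ] (hf : Differentiable ℝ f)
    (hsmooth : ∀ x y, ‖gradient f x - gradient f y‖ ≤ β * ‖x - y‖) (hβ : 0 ≤ β)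
    (hlb : ∀ x, f₀ ≤ f x) {ℱ : Filtration ℕ m0} {γ σ : ℝ} {x₀ : E} {y g : ℕ → Ω → E}
    (hy0 : ∀ ω, y 0 ω = x₀) (hy : ∀ t ω, y (t + 1) ω = y t ω - γ • g t ω)
    (hyℱ : ∀ t, StronglyMeasurable[ℱ t] (y t)) (hg : ∀ t, MemLp (g t) 2 μ)
    (hunb : ∀ t, μ[g t|ℱ t] =ᵐ[μ] fun ω => gradient f (y t ω))
    (hσ : ∀ t, ∫ ω, ‖g t ω‖ ^ 2 ∂μ ≤ σ ^ 2) (T : ℕ) :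
    γ * ∑ t ∈ Finset.range T, ∫ ω, ‖gradient f (y t ω)‖ ^ 2 ∂μ
      ≤ f x₀ - f₀ + T * (β / 2 * γ ^ 2 * σ ^ 2) := by
  set F : ℕ → ℝ := fun t => ∫ ω, f (y t ω) ∂μ
  have hstep : ∀ t, γ * ∫ ω, ‖gradient f (y t ω)‖ ^ 2 ∂μ
      ≤ F t - F (t + 1) + β / 2 * γ ^ 2 * σ ^ 2 := fun t => by
    have hdescent := integral_comp_sub_smul_le hf hsmooth hlb (ℱ.le t) (hyℱ t)
      (memLp_of_sgd hy0 hy hg t) (hg t) (hunb t) γ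
    have hnoise : β / 2 * γ ^ 2 * ∫ ω, ‖g t ω‖ ^ 2 ∂μ ≤ β / 2 * γ ^ 2 * σ ^ 2 := by
      gcongr
      exact hσ t
    simp only [F, hy]
    linarith
  have hF0 : F 0 = f x₀ := by simp [F, hy0]
  have hFT : f₀ ≤ F T := by
    simpa using integral_mono (integrable_const f₀)
      ((memLp_of_sgd hy0 hy hg T).integrable_comp_of_gradient_lipschitz hf hsmooth hlb)
      (fun ω => hlb (y T ω))
  calc γ * ∑ t ∈ Finset.range T, ∫ ω, ‖gradient f (y t ω)‖ ^ 2 ∂μ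
    _ ≤ ∑ t ∈ Finset.range T, (F t - F (t + 1) + β / 2 * γ ^ 2 * σ ^ 2) := by
      rw [Finset.mul_sum]
      exact Finset.sum_le_sum fun t _ => hstep t
    _ = F 0 - F T + T * (β / 2 * γ ^ 2 * σ ^ 2) := by
      rw [Finset.sum_add_distrib, Finset.sum_range_sub', Finset.sum_const, Finset.card_range,
        nsmul_eq_mul]
    _ ≤ f x₀ - f₀ + T * (β / 2 * γ ^ 2 * σ ^ 2) := by rw [hF0]; linarith

end SGD

/-- Convergence of RSGD-scale: for β-smooth `R_S` bounded below by `R_S x_*`,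
RSGD with the scaling residual scheme `x (t+1) = x t - α • (r t + γ • g t)`,
`r (t+1) = (1-α) • (r t + γ • g t)`, `r 0 = 0`, `α ∈ (0,1)`, `0 < γ ≤ 1/β`, with unbiased
stochastic gradients at the reference points `x t - r t` of second moment ≤ σ², for all
`c₁, c₂ > 0` with `(1-α)²(1+c₂) < 1` and `T ≥ 1`:
`min_{0 ≤ t < T} E‖∇R_S(x t)‖² ≤ (1+c₁)(R_S(x0) - R_S(x_*))/(γT) + (1+c₁)βγσ²/2
  + ((1-α)²(1+1/c₂)(1+1/c₁)/(1 - (1-α)²(1+c₂))) β² γ² σ²`. -/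
theorem rsgd_scale_convergence
    {d : ℕ} (RS : EuclideanSpace ℝ (Fin d) → ℝ) (β σ γ α : ℝ)
    (xstar x0 : EuclideanSpace ℝ (Fin d))
    (hβ : 0 < β)
    (hdiff : Differentiable ℝ RS)
    (hsmooth : ∀ x y, ‖gradient RS x - gradient RS y‖ ≤ β * ‖x - y‖)
    (hlb : ∀ x, RS xstar ≤ RS x)
    {Ω : Type*} {m0 : MeasurableSpace Ω} {μ : Measure Ω} [IsProbabilityMeasure μ]
    (ℱ : Filtration ℕ m0)
    (x r g : ℕ → Ω → EuclideanSpace ℝ (Fin d))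
    (hxadapted : Adapted ℱ x) (hradapted : Adapted ℱ r)
    (hx0 : ∀ ω, x 0 ω = x0) (hr0 : ∀ ω, r 0 ω = 0)
    (hgint : ∀ t, Integrable (g t) μ)
    (hgsqint : ∀ t, Integrable (fun ω => ‖g t ω‖ ^ 2) μ)
    (hunbiased : ∀ t, μ[g t | ℱ t] =ᵐ[μ] fun ω => gradient RS (x t ω - r t ω))
    (hsecond : ∀ t, ∫ ω, ‖g t ω‖ ^ 2 ∂μ ≤ σ ^ 2)
    (hxrec : ∀ t ω, x (t + 1) ω = x t ω - α • (r t ω + γ • g t ω))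
    (hrrec : ∀ t ω, r (t + 1) ω = (1 - α) • (r t ω + γ • g t ω))
    (hγ0 : 0 < γ)
    (c₁ c₂ : ℝ) (hc₁ : 0 < c₁) (hc₂ : 0 < c₂) (hc₂' : (1 - α) ^ 2 * (1 + c₂) < 1)
    (T : ℕ) (hT : 1 ≤ T) :
    (Finset.range T).inf' (Finset.nonempty_range_iff.mpr (by omega))
        (fun t => ∫ ω, ‖gradient RS (x t ω)‖ ^ 2 ∂μ)
      ≤ (1 + c₁) * (RS x0 - RS xstar) / (γ * T) + (1 + c₁) * β * γ * σ ^ 2 / 2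
        + ((1 - α) ^ 2 * (1 + 1 / c₂) * (1 + 1 / c₁) / (1 - (1 - α) ^ 2 * (1 + c₂)))
          * β ^ 2 * γ ^ 2 * σ ^ 2 := by
  set y : ℕ → Ω → EuclideanSpace ℝ (Fin d) := fun t ω => x t ω - r t ω
  have hy0 : ∀ ω, y 0 ω = x0 := fun ω => by simp [y, hx0, hr0]
  have hy : ∀ t ω, y (t + 1) ω = y t ω - γ • g t ω := fun t ω => by
    simp only [y, hxrec, hrrec]
    module
  have hg : ∀ t, MemLp (g t) 2 μ := fun t =>
    (memLp_two_iff_integrable_sq_norm (hgint t).1).2 (hgsqint t)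
  have hr2 := memLp_of_scaled_residual hr0 hrrec hg
  have hy2 := memLp_of_sgd hy0 hy hg
  have hx2 : ∀ t, MemLp (x t) 2 μ := fun t => by
    rw [show x t = y t + r t from funext fun ω => (sub_add_cancel _ _).symm]
    exact (hy2 t).add (hr2 t)
  have hcompare : ∀ t, ∫ ω, ‖gradient RS (x t ω)‖ ^ 2 ∂μ
      ≤ (1 + c₁) * ∫ ω, ‖gradient RS (y t ω)‖ ^ 2 ∂μ + (1 + 1 / c₁) * β ^ 2 * ((1 - α) ^ 2
        * (1 + 1 / c₂) * γ ^ 2 * σ ^ 2 / (1 - (1 - α) ^ 2 * (1 + c₂))) := fun t => by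
    refine (integral_sq_norm_gradient_comp_le hsmooth hc₁ (hx2 t) (hy2 t)).trans ?_
    simp only [y, sub_sub_cancel]
    gcongr
    exact integral_sq_norm_scaled_residual_le hc₂ hc₂' hr0 hrrec hg hsecond t
  have hsum_y : ∑ t ∈ Finset.range T, ∫ ω, ‖gradient RS (y t ω)‖ ^ 2 ∂μ
      ≤ (RS x0 - RS xstar + T * (β / 2 * γ ^ 2 * σ ^ 2)) / γ := by
    rw [le_div_iff₀ hγ0, mul_comm]
    exact sum_integral_sq_norm_gradient_sgd_le hdiff hsmooth hβ.le hlb hy0 hy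
      (fun t => ((hxadapted t).sub (hradapted t)).stronglyMeasurable) hg hunbiased hsecond T
  refine (Finset.inf'_range_le_of_le_mul_add _ (by positivity) hcompare hsum_y).trans_eq ?_
  field_simp
end

section
/- Let E be a real inner product space, T ≥ 1, γ_t learning rates with 0 < γ_t ≤ 2/β, and for each t let f_t, f'_t : E → ℝ be convex, differentiable with β-Lipschitz gradient, and with gradients bounded by L (‖∇f_t(x)‖ ≤ L and ‖∇f'_t(x)‖ ≤ L for all x). Let D ⊆ {0, …, T−1} and assume f_t = f'_t for every t ∉ D. Define two gradient descent trajectories y_0 = y'_0, y_{t+1} = y_t − γ_t·∇f_t(y_t), y'_{t+1} = y'_t − γ_t·∇f'_t(y'_t). Then ‖y_T − y'_T‖ ≤ 2L·∑_{t ∈ D} γ_t. -/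
/-!
For a convex `f` with `β`-Lipschitz gradient, combining the first-order convexity inequality with
the quadratic upper bound from smoothness gives cocoercivity,
`β⁻¹ ‖∇f x - ∇f y‖² ≤ ⟪∇f x - ∇f y, x - y⟫`, and hence the gradient step `x ↦ x - γ ∇f x` is
nonexpansive for `0 ≤ γ ≤ 2 / β`. So on a step outside `D`, where both trajectories apply the same
map, their distance does not grow, and on a step in `D` it grows by at most
`γ t ‖∇f t (y t) - ∇f' t (y' t)‖ ≤ 2 L γ t`.
-/

open Set Finset
open scoped RealInnerProductSpace

section GradientDescent

variable {E : Type*} [NormedAddCommGroup E] [InnerProductSpace ℝ E] [CompleteSpace E]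

lemma hasDerivAt_comp_add_smul {f : E → ℝ} {x v : E} {t : ℝ}
    (hf : DifferentiableAt ℝ f (x + t • v)) :
    HasDerivAt (fun s : ℝ => f (x + s • v)) ⟪gradient f (x + t • v), v⟫ t := by
  rw [inner_gradient_left]
  have hline : HasDerivAt (fun s : ℝ => x + s • v) v t := by
    simpa using ((hasDerivAt_id t).smul_const v).const_add x
  exact hf.hasFDerivAt.comp_hasDerivAt t hline

theorem ConvexOn.add_inner_gradient_le {f : E → ℝ} (hf : ConvexOn ℝ univ f) {x : E}
    (hx : DifferentiableAt ℝ f x) (y : E) :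
    f x + ⟪gradient f x, y - x⟫ ≤ f y := by
  have hderiv : HasDerivAt (fun s : ℝ => f (x + s • (y - x))) ⟪gradient f x, y - x⟫ 0 := by
    simpa using hasDerivAt_comp_add_smul (v := y - x) (t := 0) (by simpa using hx)
  have hline : ConvexOn ℝ univ (fun s : ℝ => f (x + s • (y - x))) := by
    simpa [Function.comp_def, AffineMap.lineMap_apply, add_comm] using
      hf.comp_affineMap (AffineMap.lineMap x y)
  have := hline.le_slope_of_hasDerivAt (mem_univ 0) (mem_univ 1) zero_lt_one hderiv
  simp only [slope_def_field, zero_smul, add_zero, one_smul, add_sub_cancel, sub_zero,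
    div_one] at this
  linarith

theorem le_add_inner_gradient_add_sq {f : E → ℝ} {β : ℝ} (hf : Differentiable ℝ f)
    (hsmooth : ∀ x y, ‖gradient f x - gradient f y‖ ≤ β * ‖x - y‖) (x y : E) :
    f y ≤ f x + ⟪gradient f x, y - x⟫ + β / 2 * ‖y - x‖ ^ 2 := by
  set v := y - x
  set ψ : ℝ → ℝ := fun t => f (x + t • v) - t * ⟪gradient f x, v⟫ - β / 2 * t ^ 2 * ‖v‖ ^ 2
  have hψ : ∀ t, HasDerivAt ψ
      (⟪gradient f (x + t • v), v⟫ - ⟪gradient f x, v⟫ - β * t * ‖v‖ ^ 2) t := by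
    intro t
    have hq : HasDerivAt (fun t : ℝ => β / 2 * t ^ 2 * ‖v‖ ^ 2) (β * t * ‖v‖ ^ 2) t := by
      refine (((hasDerivAt_pow 2 t).const_mul (β / 2)).mul_const (‖v‖ ^ 2)).congr_deriv ?_
      push_cast; ring
    have hl : HasDerivAt (fun t : ℝ => t * ⟪gradient f x, v⟫) ⟪gradient f x, v⟫ t := by
      simpa using (hasDerivAt_id t).mul_const _
    exact ((hasDerivAt_comp_add_smul (hf _)).sub hl).sub hq
  have hanti : AntitoneOn ψ (Icc 0 1) := by
    refine antitoneOn_of_hasDerivWithinAt_nonpos (convex_Icc 0 1)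
      (fun t _ => (hψ t).continuousAt.continuousWithinAt) (fun t _ => (hψ t).hasDerivWithinAt) ?_
    intro t ht
    rw [interior_Icc] at ht
    have : ⟪gradient f (x + t • v) - gradient f x, v⟫ ≤ β * t * ‖v‖ ^ 2 :=
      calc ⟪gradient f (x + t • v) - gradient f x, v⟫
          ≤ ‖gradient f (x + t • v) - gradient f x‖ * ‖v‖ := real_inner_le_norm _ _
        _ ≤ β * ‖t • v‖ * ‖v‖ := by
          gcongr
          simpa using hsmooth (x + t • v) x
        _ = β * t * ‖v‖ ^ 2 := by rw [norm_smul, Real.norm_of_nonneg ht.1.le]; ring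
    rw [inner_sub_left] at this
    linarith
  have := hanti ⟨le_rfl, zero_le_one⟩ ⟨zero_le_one, le_rfl⟩ zero_le_one
  simp only [ψ, v, zero_smul, add_zero, one_smul, add_sub_cancel] at this
  linarith

/-- Chain the convexity lower bound at `a` with the smoothness upper bound at `b`, evaluated at
the minimiser `z = b - β⁻¹ • (∇f b - ∇f a)` of the latter. -/
theorem ConvexOn.add_inner_gradient_add_sq_le {f : E → ℝ} {β : ℝ} (hβ : 0 < β)
    (hf : ConvexOn ℝ univ f) (hdiff : Differentiable ℝ f)
    (hsmooth : ∀ x y, ‖gradient f x - gradient f y‖ ≤ β * ‖x - y‖) (a b : E) :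
    f a + ⟪gradient f a, b - a⟫ + 1 / (2 * β) * ‖gradient f b - gradient f a‖ ^ 2 ≤ f b := by
  set d := gradient f b - gradient f a
  set z := b - β⁻¹ • d
  have hlower := hf.add_inner_gradient_le (hdiff a) z
  have hupper := le_add_inner_gradient_add_sq hdiff hsmooth b z
  have hzb : z - b = -(β⁻¹ • d) := by simp [z]
  have hza : z - a = (b - a) + (z - b) := by abel
  have hinner : ⟪gradient f b, z - b⟫ - ⟪gradient f a, z - b⟫ = -(β⁻¹ * ‖d‖ ^ 2) := by
    rw [← inner_sub_left, hzb, inner_neg_right, real_inner_smul_right, real_inner_self_eq_norm_sq]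
  have hnorm : β / 2 * ‖z - b‖ ^ 2 = 1 / (2 * β) * ‖d‖ ^ 2 := by
    rw [hzb, norm_neg, norm_smul, Real.norm_of_nonneg (inv_nonneg.mpr hβ.le)]
    field_simp
  have hhalf : β⁻¹ * ‖d‖ ^ 2 = 2 * (1 / (2 * β) * ‖d‖ ^ 2) := by field_simp
  rw [hza, inner_add_right] at hlower
  linarith

theorem ConvexOn.inv_mul_sq_norm_gradient_sub_le_inner {f : E → ℝ} {β : ℝ} (hβ : 0 < β)
    (hf : ConvexOn ℝ univ f) (hdiff : Differentiable ℝ f)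
    (hsmooth : ∀ x y, ‖gradient f x - gradient f y‖ ≤ β * ‖x - y‖) (x y : E) :
    β⁻¹ * ‖gradient f x - gradient f y‖ ^ 2 ≤ ⟪gradient f x - gradient f y, x - y⟫ := by
  have hxy := hf.add_inner_gradient_add_sq_le hβ hdiff hsmooth x y
  have hyx := hf.add_inner_gradient_add_sq_le hβ hdiff hsmooth y x
  rw [norm_sub_rev] at hxy
  have hinner : ⟪gradient f x - gradient f y, x - y⟫ =
      -⟪gradient f x, y - x⟫ - ⟪gradient f y, x - y⟫ := by
    rw [inner_sub_left, ← neg_sub x y, inner_neg_right]; ring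
  have hhalf : β⁻¹ = 1 / (2 * β) + 1 / (2 * β) := by field_simp; norm_num
  rw [hinner, hhalf]
  linarith

noncomputable def gradientStep (f : E → ℝ) (γ : ℝ) (x : E) : E := x - γ • gradient f x

lemma gradientStep_sub_gradientStep (f g : E → ℝ) (γ : ℝ) (x y : E) :
    gradientStep f γ x - gradientStep g γ y = (x - y) - γ • (gradient f x - gradient g y) := by
  simp only [gradientStep, smul_sub]; abel

theorem ConvexOn.norm_gradientStep_sub_le {f : E → ℝ} {β γ : ℝ} (hβ : 0 < β)
    (hf : ConvexOn ℝ univ f) (hdiff : Differentiable ℝ f)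
    (hsmooth : ∀ x y, ‖gradient f x - gradient f y‖ ≤ β * ‖x - y‖) (hγ₀ : 0 ≤ γ)
    (hγ : γ ≤ 2 / β) (x y : E) :
    ‖gradientStep f γ x - gradientStep f γ y‖ ≤ ‖x - y‖ := by
  rw [← sq_le_sq₀ (norm_nonneg _) (norm_nonneg _), gradientStep_sub_gradientStep,
    norm_sub_sq_real, real_inner_smul_right, real_inner_comm, norm_smul,
    Real.norm_of_nonneg hγ₀]
  have hcoco := hf.inv_mul_sq_norm_gradient_sub_le_inner hβ hdiff hsmooth x y
  have hγsq : γ * γ ≤ γ * (2 * β⁻¹) := by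
    gcongr
    simpa [div_eq_mul_inv] using hγ
  nlinarith [sq_nonneg ‖gradient f x - gradient f y‖]

lemma norm_gradientStep_sub_gradientStep_le {f g : E → ℝ} {γ L : ℝ} (hγ : 0 ≤ γ) {x y : E}
    (hfx : ‖gradient f x‖ ≤ L) (hgy : ‖gradient g y‖ ≤ L) :
    ‖gradientStep f γ x - gradientStep g γ y‖ ≤ ‖x - y‖ + 2 * L * γ := by
  rw [gradientStep_sub_gradientStep]
  calc ‖(x - y) - γ • (gradient f x - gradient g y)‖
      ≤ ‖x - y‖ + γ * ‖gradient f x - gradient g y‖ :=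
        (norm_sub_le _ _).trans_eq (by rw [norm_smul, Real.norm_of_nonneg hγ])
    _ ≤ ‖x - y‖ + γ * (L + L) := by
        gcongr
        exact (norm_sub_le _ _).trans (add_le_add hfx hgy)
    _ = ‖x - y‖ + 2 * L * γ := by ring

end GradientDescent

lemma le_add_sum_range_of_succ_le_add {a b : ℕ → ℝ} {T : ℕ}
    (h : ∀ t < T, a (t + 1) ≤ a t + b t) : a T ≤ a 0 + ∑ t ∈ range T, b t := by
  induction T with
  | zero => simp
  | succ T ih =>
    rw [sum_range_succ, ← add_assoc]
    exact (h T T.lt_succ_self).trans (by gcongr; exact ih fun t ht => h t (ht.trans T.lt_succ_self))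

theorem gd_trajectories_coupling_bound_general
    {E : Type*} [NormedAddCommGroup E] [InnerProductSpace ℝ E] [CompleteSpace E]
    (T : ℕ) (β L : ℝ) (hβ : 0 < β) (γ : ℕ → ℝ)
    (hγ : ∀ t, 0 < γ t ∧ γ t ≤ 2 / β)
    (f f' : ℕ → E → ℝ)
    (hconv : ∀ t, ConvexOn ℝ Set.univ (f t))
    (hdiff : ∀ t, Differentiable ℝ (f t))
    (hsmooth : ∀ t x y, ‖gradient (f t) x - gradient (f t) y‖ ≤ β * ‖x - y‖)
    (hL : ∀ t x, ‖gradient (f t) x‖ ≤ L) (hL' : ∀ t x, ‖gradient (f' t) x‖ ≤ L)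
    (D : Finset ℕ) (hD : D ⊆ Finset.range T)
    (hsame : ∀ t < T, t ∉ D → f t = f' t)
    (y y' : ℕ → E) (hy0 : y 0 = y' 0)
    (hy : ∀ t, y (t + 1) = y t - γ t • gradient (f t) (y t))
    (hy' : ∀ t, y' (t + 1) = y' t - γ t • gradient (f' t) (y' t)) :
    ‖y T - y' T‖ ≤ 2 * L * ∑ t ∈ D, γ t := by
  have hstep : ∀ t < T, ‖y (t + 1) - y' (t + 1)‖ ≤
      ‖y t - y' t‖ + if t ∈ D then 2 * L * γ t else 0 := by
    intro t ht
    rw [hy, hy']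
    split_ifs with htD
    · exact norm_gradientStep_sub_gradientStep_le (hγ t).1.le (hL t _) (hL' t _)
    · rw [add_zero, ← hsame t ht htD]
      exact (hconv t).norm_gradientStep_sub_le hβ (hdiff t) (hsmooth t) (hγ t).1.le (hγ t).2 _ _
  calc ‖y T - y' T‖ ≤ ‖y 0 - y' 0‖ + ∑ t ∈ range T, if t ∈ D then 2 * L * γ t else 0 :=
        le_add_sum_range_of_succ_le_add (a := fun t => ‖y t - y' t‖) hstep
    _ = 2 * L * ∑ t ∈ D, γ t := by
        rw [hy0, sub_self, norm_zero, zero_add, sum_ite_mem, Finset.inter_eq_right.mpr hD, mul_sum]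

/-- coupling bound for two gradient descent trajectories driven by per-step
convex β-smooth losses with L-bounded gradients, which coincide outside a set `D ⊆ {0,…,T-1}`
of steps, with learning rates `0 < γ t ≤ 2/β`:
`‖y T - y' T‖ ≤ 2L ∑_{t ∈ D} γ t`. -/
theorem gd_trajectories_coupling_bound
    {E : Type*} [NormedAddCommGroup E] [InnerProductSpace ℝ E] [CompleteSpace E]
    (T : ℕ) (hT : 1 ≤ T) (β L : ℝ) (hβ : 0 < β) (γ : ℕ → ℝ)
    (hγ : ∀ t, 0 < γ t ∧ γ t ≤ 2 / β)
    (f f' : ℕ → E → ℝ)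
    (hconv : ∀ t, ConvexOn ℝ Set.univ (f t)) (hconv' : ∀ t, ConvexOn ℝ Set.univ (f' t))
    (hdiff : ∀ t, Differentiable ℝ (f t)) (hdiff' : ∀ t, Differentiable ℝ (f' t))
    (hsmooth : ∀ t x y, ‖gradient (f t) x - gradient (f t) y‖ ≤ β * ‖x - y‖)
    (hsmooth' : ∀ t x y, ‖gradient (f' t) x - gradient (f' t) y‖ ≤ β * ‖x - y‖)
    (hL : ∀ t x, ‖gradient (f t) x‖ ≤ L) (hL' : ∀ t x, ‖gradient (f' t) x‖ ≤ L)
    (D : Finset ℕ) (hD : D ⊆ Finset.range T)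
    (hsame : ∀ t < T, t ∉ D → f t = f' t)
    (y y' : ℕ → E) (hy0 : y 0 = y' 0)
    (hy : ∀ t, y (t + 1) = y t - γ t • gradient (f t) (y t))
    (hy' : ∀ t, y' (t + 1) = y' t - γ t • gradient (f' t) (y' t)) :
    ‖y T - y' T‖ ≤ 2 * L * ∑ t ∈ D, γ t :=
  gd_trajectories_coupling_bound_general T β L hβ γ hγ f f' hconv hdiff hsmooth hL hL' D hD hsame y
    y' hy0 hy hy'
end
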